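/- The game RIT is miserable: for every position x, either (i) x has Conway pair (0,1) or (1,0), or (ii) there is no move from x to a (0,1)- or (1,0)-position, or (iii) there are moves from x to both a (0,1)-position and a (1,0)-position. -/

import Mathlib

/-!
Write `rem λ = (λ₁ - λ₂, λ₃ - λ₄, …)`. A move changes exactly one coordinate of `rem λ`; every
decrease of a coordinate is realised by lowering an odd-numbered part, while lowering an
even-numbered part increases a coordinate, and the total size always drops. So, as in Nim, the
Grundy value is the nim-sum of `rem λ`, and, as in misère Nim, the misère value is that nim-sum with
its last bit flipped exactly when all coordinates of `rem λ` are at most `1`. Hence the `(0,1)`- and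
`(1,0)`-positions are those with `rem λ ≤ 1`: from a position with exactly one coordinate `≥ 2`,
lowering it to `0` or `1` reaches both kinds, and with two such coordinates no move reaches either.
-/

/-- The `j`-th part (0-indexed) of a partition given as a list, `0` beyond the end. -/
def part (l : List ℕ) (j : ℕ) : ℕ := l.getD j 0

/-- A partition: a nonincreasing list of positive integers. -/
def IsPartition (l : List ℕ) : Prop :=
  l.Chain' (· ≥ ·) ∧ ∀ x ∈ l, 0 < x

/-- RIT move: replace the part at (0-indexed) position `i` by a smaller value `v`,
keeping the sequence nonincreasing, then drop the (trailing) zeros. -/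
def RitMove (l l' : List ℕ) : Prop :=
  ∃ i v, i < l.length ∧ v < part l i ∧ (l.set i v).Chain' (· ≥ ·) ∧
    l' = (l.set i v).filter (fun x => x ≠ 0)

/-- RIT move on an odd-numbered row (1-indexed), i.e. an even 0-indexed position. -/
def RitMoveOdd (l l' : List ℕ) : Prop :=
  ∃ i v, i < l.length ∧ i % 2 = 0 ∧ v < part l i ∧ (l.set i v).Chain' (· ≥ ·) ∧
    l' = (l.set i v).filter (fun x => x ≠ 0)

/-- RIT move on an even-numbered row (1-indexed), i.e. an odd 0-indexed position. -/
def RitMoveEven (l l' : List ℕ) : Prop :=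
  ∃ i v, i < l.length ∧ i % 2 = 1 ∧ v < part l i ∧ (l.set i v).Chain' (· ≥ ·) ∧
    l' = (l.set i v).filter (fun x => x ≠ 0)

/-- `core λ = (λ₂, λ₂, λ₄, λ₄, …)` (1-indexed parts), as a `0`-padded sequence. -/
def core (l : List ℕ) : ℕ → ℕ := fun j => part l (2 * (j / 2) + 1)

/-- `rem λ = (λ₁ - λ₂, λ₃ - λ₄, …)` (1-indexed parts), as a `0`-padded sequence. -/
def rem (l : List ℕ) : ℕ → ℕ := fun i => part l (2 * i) - part l (2 * i + 1)

/-- A Nim move strictly decreases exactly one coordinate. -/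
def NimMove (p q : ℕ → ℕ) : Prop := ∃ i, q i < p i ∧ ∀ j, j ≠ i → q j = p j

/-- The nim-sum (bitwise XOR) of the remnant of `l`:
`(λ₁ - λ₂) ⊕ (λ₃ - λ₄) ⊕ ⋯ ⊕ (λ_{2⌈r/2⌉-1} - λ_{2⌈r/2⌉})`. -/
def nimSum (l : List ℕ) : ℕ :=
  (List.ofFn (fun i : Fin ((l.length + 1) / 2) => rem l i)).foldr (· ^^^ ·) 0

/-- The minimal excludant of a set of naturals. -/
noncomputable def mexOf (S : Set ℕ) : ℕ := sInf {n | n ∉ S}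

/-- `G` is the (normal play) Sprague-Grundy function of RIT. -/
def IsRitGrundy (G : List ℕ → ℕ) : Prop :=
  ∀ l, IsPartition l → G l = mexOf {n | ∃ l', RitMove l l' ∧ G l' = n}

/-- `G` is the misère Grundy function of RIT (value `1` at the terminal position). -/
def IsRitMisereGrundy (G : List ℕ → ℕ) : Prop :=
  G [] = 1 ∧ ∀ l, IsPartition l → l ≠ [] →
    G l = mexOf {n | ∃ l', RitMove l l' ∧ G l' = n}

/-- `G` is the misère Grundy function of Nim on `0`-padded sequences of heaps. -/
def IsNimMisereGrundy (G : (ℕ → ℕ) → ℕ) : Prop :=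
  (∀ p : ℕ → ℕ, (∀ i, p i = 0) → G p = 1) ∧
  (∀ p : ℕ → ℕ, (Function.support p).Finite → (∃ i, p i ≠ 0) →
    G p = mexOf {n | ∃ q, NimMove p q ∧ G q = n})

/-- `P` is the set of P-positions of RIT under normal play. -/
def IsRitP (P : List ℕ → Prop) : Prop :=
  ∀ l, IsPartition l → (P l ↔ ∀ l', RitMove l l' → ¬ P l')


lemma xor_le_one_of_le_one {a b : ℕ} (ha : a ≤ 1) (hb : b ≤ 1) : a ^^^ b ≤ 1 := by
  interval_cases a <;> interval_cases b <;> decide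

def xorRange (f : ℕ → ℕ) : ℕ → ℕ
  | 0 => 0
  | n + 1 => xorRange f n ^^^ f n

lemma xorRange_congr {f g : ℕ → ℕ} {n : ℕ} (h : ∀ j < n, f j = g j) :
    xorRange f n = xorRange g n := by
  induction n with
  | zero => rfl
  | succ n ih => rw [xorRange, xorRange, ih fun j hj => h j (by omega), h n (by omega)]

lemma xorRange_eq_of_le {f : ℕ → ℕ} {n m : ℕ} (hf : ∀ j, n ≤ j → f j = 0) (h : n ≤ m) :
    xorRange f m = xorRange f n := by
  induction m, h using Nat.le_induction with
  | base => rfl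
  | succ m hm ih => rw [xorRange, hf m hm, Nat.xor_zero, ih]

lemma xorRange_update {f g : ℕ → ℕ} {k n : ℕ} (h : ∀ j ≠ k, g j = f j) (hk : k < n) :
    xorRange g n = xorRange f n ^^^ (f k ^^^ g k) := by
  induction n with
  | zero => omega
  | succ n ih =>
    rcases Nat.lt_succ_iff_lt_or_eq.1 hk with hk | rfl
    · rw [xorRange, xorRange, ih hk, h n (by omega)]
      ac_rfl
    · rw [xorRange, xorRange, xorRange_congr fun j hj => h j (by omega), Nat.xor_assoc,
        Nat.xor_xor_cancel_left]

/-- The winning-move lemma of Nim: every smaller value is reached by lowering a single term. -/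
lemma exists_xor_lt_of_lt_xorRange {f : ℕ → ℕ} {n t : ℕ} (ht : t < xorRange f n) :
    ∃ k, f k ^^^ (xorRange f n ^^^ t) < f k := by
  induction n generalizing t with
  | zero => simp [xorRange] at ht
  | succ n ih =>
    rw [xorRange] at ht ⊢
    rcases Nat.lt_xor_cases ht with h | h
    · obtain ⟨k, hk⟩ := ih h
      refine ⟨k, ?_⟩
      rwa [show xorRange f n ^^^ f n ^^^ t = xorRange f n ^^^ (t ^^^ f n) by ac_rfl]
    · refine ⟨n, ?_⟩
      rwa [show f n ^^^ (xorRange f n ^^^ f n ^^^ t) = t ^^^ xorRange f n by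
        rw [Nat.xor_comm (xorRange f n), Nat.xor_assoc, Nat.xor_xor_cancel_left, Nat.xor_comm]]

lemma xorRange_le_one {f : ℕ → ℕ} (hf : ∀ j, f j ≤ 1) (n : ℕ) : xorRange f n ≤ 1 := by
  induction n with
  | zero => exact zero_le_one
  | succ n ih => exact xor_le_one_of_le_one ih (hf n)

lemma part_eq_zero_of_length_le {l : List ℕ} {j : ℕ} (h : l.length ≤ j) : part l j = 0 :=
  List.getD_eq_default _ _ h

lemma rem_eq_zero_of_le {l : List ℕ} {j : ℕ} (h : (l.length + 1) / 2 ≤ j) : rem l j = 0 := by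
  simp [rem, part_eq_zero_of_length_le (by omega : l.length ≤ 2 * j)]

lemma foldr_xor_ofFn (f : ℕ → ℕ) (m : ℕ) :
    (List.ofFn fun i : Fin m => f i).foldr (· ^^^ ·) 0 = xorRange f m := by
  have foldr_xor (xs : List ℕ) (a : ℕ) :
      xs.foldr (· ^^^ ·) a = xs.foldr (· ^^^ ·) 0 ^^^ a := by
    induction xs with
    | nil => simp
    | cons x xs ih => simp [ih, Nat.xor_assoc]
  induction m with
  | zero => rfl
  | succ m ih =>
    rw [List.ofFn_succ', List.concat_eq_append, List.foldr_concat, foldr_xor]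
    simp only [Fin.val_castSucc, Fin.val_last, ih, Nat.xor_zero, xorRange]

lemma nimSum_eq_xorRange (l : List ℕ) {n : ℕ} (h : (l.length + 1) / 2 ≤ n) :
    nimSum l = xorRange (rem l) n := by
  rw [nimSum, foldr_xor_ofFn, xorRange_eq_of_le (fun j hj => rem_eq_zero_of_le hj) h]

lemma nimSum_update {l l' : List ℕ} {k : ℕ} (h : ∀ j ≠ k, rem l' j = rem l j) :
    nimSum l' = nimSum l ^^^ (rem l k ^^^ rem l' k) := by
  set n := (l.length + 1) / 2 + (l'.length + 1) / 2 + k + 1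
  rw [nimSum_eq_xorRange l (n := n) (by omega), nimSum_eq_xorRange l' (n := n) (by omega)]
  exact xorRange_update h (by omega)

lemma exists_rem_xor_lt_of_lt_nimSum {l : List ℕ} {t : ℕ} (ht : t < nimSum l) :
    ∃ k, rem l k ^^^ (nimSum l ^^^ t) < rem l k := by
  rw [nimSum_eq_xorRange l le_rfl] at ht ⊢
  exact exists_xor_lt_of_lt_xorRange ht

lemma nimSum_le_one {l : List ℕ} (h : ∀ j, rem l j ≤ 1) : nimSum l ≤ 1 := by
  rw [nimSum_eq_xorRange l le_rfl]
  exact xorRange_le_one h _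

lemma part_eq_getElem {l : List ℕ} {j : ℕ} (h : j < l.length) : part l j = l[j] :=
  List.getD_eq_getElem _ _ h

lemma isChain_ge_iff_part {l : List ℕ} :
    l.IsChain (· ≥ ·) ↔ ∀ j, part l (j + 1) ≤ part l j := by
  rw [List.isChain_iff_getElem]
  refine ⟨fun h j => ?_, fun h j hj => ?_⟩
  · by_cases hj : j + 1 < l.length
    · rw [part_eq_getElem hj, part_eq_getElem (by omega)]
      exact h j hj
    · rw [part_eq_zero_of_length_le (by omega)]
      exact Nat.zero_le _
  · simpa [part_eq_getElem hj, part_eq_getElem (Nat.lt_of_succ_lt hj)] using h j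

lemma IsPartition.part_succ_le {l : List ℕ} (hl : IsPartition l) (j : ℕ) :
    part l (j + 1) ≤ part l j :=
  isChain_ge_iff_part.1 hl.1 j

lemma IsPartition.part_pos {l : List ℕ} (hl : IsPartition l) {j : ℕ} (h : j < l.length) :
    0 < part l j := by
  rw [part_eq_getElem h]
  exact hl.2 _ (List.getElem_mem h)

lemma lt_length_of_part_pos {l : List ℕ} {j : ℕ} (h : 0 < part l j) : j < l.length := by
  by_contra hj
  rw [part_eq_zero_of_length_le (by omega)] at h
  exact lt_irrefl 0 h

lemma part_set {l : List ℕ} {i : ℕ} (hi : i < l.length) (v j : ℕ) :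
    part (l.set i v) j = if j = i then v else part l j := by
  simp only [part, List.getD_eq_getElem?_getD, List.getElem?_set, if_pos hi]
  by_cases h : j = i
  · simp [h]
  · simp [h, Ne.symm h]

/-- On a nonincreasing list the zeros form a suffix. -/
lemma part_filter_ne_zero {l : List ℕ} (hl : l.IsChain (· ≥ ·)) (j : ℕ) :
    part (l.filter (· ≠ 0)) j = part l j := by
  induction l generalizing j with
  | nil => rfl
  | cons a t ih =>
    by_cases ha : a = 0
    · have hzero : ∀ x ∈ a :: t, x = 0 := by
        have := List.pairwise_cons.1 (List.isChain_iff_pairwise.1 hl)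
        simp only [List.mem_cons, forall_eq_or_imp]
        exact ⟨ha, fun x hx => by have := this.1 x hx; omega⟩
      rw [List.filter_eq_nil_iff.2 (by simpa using hzero)]
      simp only [part, List.getD_eq_getElem?_getD, List.getElem?_nil, Option.getD_none]
      cases h : (a :: t)[j]? with
      | none => rfl
      | some x => exact (hzero x (List.mem_of_getElem? h)).symm
    · rw [List.filter_cons_of_pos (by simpa using ha)]
      cases j with
      | zero => rfl
      | succ j => exact ih hl.tail j

lemma sum_filter_ne_zero (l : List ℕ) : (l.filter (· ≠ 0)).sum = l.sum := by
  induction l with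
  | nil => rfl
  | cons a l ih =>
    simp only [ne_eq, decide_not] at ih
    by_cases h : a = 0 <;> simp [h, ih]

lemma RitMove.isPartition {l l' : List ℕ} (h : RitMove l l') : IsPartition l' := by
  obtain ⟨i, v, -, -, hc, rfl⟩ := h
  refine ⟨hc.sublist List.filter_sublist, fun x hx => Nat.pos_of_ne_zero ?_⟩
  simpa using (List.mem_filter.1 hx).2

lemma RitMove.sum_lt {l l' : List ℕ} (h : RitMove l l') : l'.sum < l.sum := by
  obtain ⟨i, v, hi, hv, -, rfl⟩ := h
  rw [sum_filter_ne_zero, List.sum_set, if_pos hi, ← List.sum_take_add_sum_drop l i,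
    List.drop_eq_getElem_cons hi, List.sum_cons, ← part_eq_getElem hi]
  omega

lemma RitMove.exists_part_eq {l l' : List ℕ} (h : RitMove l l') :
    ∃ i v, v < part l i ∧ part l (i + 1) ≤ v ∧
      ∀ j, part l' j = if j = i then v else part l j := by
  obtain ⟨i, v, hi, hv, hc, rfl⟩ := h
  have hnext := isChain_ge_iff_part.1 hc i
  simp only [part_set hi, if_neg (Nat.succ_ne_self i), ↓reduceIte] at hnext
  exact ⟨i, v, hv, hnext, fun j => by rw [part_filter_ne_zero hc, part_set hi]⟩

lemma exists_ritMove_of_part {l : List ℕ} (hl : IsPartition l) {i v : ℕ} (hv : v < part l i)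
    (hnext : part l (i + 1) ≤ v) :
    ∃ l', RitMove l l' ∧ ∀ j, part l' j = if j = i then v else part l j := by
  have hi : i < l.length := lt_length_of_part_pos (by omega)
  have hc : (l.set i v).IsChain (· ≥ ·) := by
    refine isChain_ge_iff_part.2 fun j => ?_
    have := hl.part_succ_le j
    simp only [part_set hi]
    split_ifs <;> subst_vars <;> omega
  exact ⟨_, ⟨i, v, hi, hv, hc, rfl⟩, fun j => by rw [part_filter_ne_zero hc, part_set hi]⟩

lemma rem_eq_of_part_eq_update {l l' : List ℕ} {i v : ℕ}
    (hp : ∀ j, part l' j = if j = i then v else part l j) {j : ℕ} (hj : j ≠ i / 2) :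
    rem l' j = rem l j := by
  simp only [rem, hp]
  rw [if_neg (by omega), if_neg (by omega)]

lemma RitMove.exists_rem {l l' : List ℕ} (hl : IsPartition l) (h : RitMove l l') :
    ∃ k, (∀ j ≠ k, rem l' j = rem l j) ∧ rem l' k ≠ rem l k := by
  obtain ⟨i, v, hv, hnext, hp⟩ := h.exists_part_eq
  refine ⟨i / 2, fun j => rem_eq_of_part_eq_update hp, ?_⟩
  rcases Nat.even_or_odd' i with ⟨m, rfl | rfl⟩
  · simp only [rem, hp, show 2 * m / 2 = m by omega, if_neg (Nat.succ_ne_self _), ↓reduceIte]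
    omega
  · have := hl.part_succ_le (2 * m)
    simp only [rem, hp, show (2 * m + 1) / 2 = m by omega, if_neg (Nat.succ_ne_self _).symm,
      ↓reduceIte]
    omega

lemma exists_ritMove_rem_eq {l : List ℕ} (hl : IsPartition l) {k r : ℕ} (h : r < rem l k) :
    ∃ l', RitMove l l' ∧ (∀ j ≠ k, rem l' j = rem l j) ∧ rem l' k = r := by
  obtain ⟨l', hm, hp⟩ := exists_ritMove_of_part hl (i := 2 * k) (v := part l (2 * k + 1) + r)
    (by unfold rem at h; omega) (Nat.le_add_right _ _)
  refine ⟨l', hm, fun j hj => rem_eq_of_part_eq_update hp (by omega), ?_⟩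
  simp only [rem, hp, if_neg (Nat.succ_ne_self _), ↓reduceIte]
  omega

/-- Lowering the last part raises the last coordinate of the remnant from `0` to `1`. -/
lemma exists_ritMove_rem_eq_one {l : List ℕ} (hl : IsPartition l) (hne : l ≠ [])
    (h0 : ∀ j, rem l j = 0) :
    ∃ l' k, RitMove l l' ∧ (∀ j ≠ k, rem l' j = rem l j) ∧ rem l' k = 1 := by
  have hlen : 0 < l.length := List.length_pos_iff.2 hne
  obtain ⟨m, hm⟩ : ∃ m, l.length = 2 * (m + 1) := by
    refine ⟨l.length / 2 - 1, ?_⟩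
    by_contra hodd
    have hpos := hl.part_pos (j := 2 * (l.length / 2)) (by omega)
    have := h0 (l.length / 2)
    rw [rem, part_eq_zero_of_length_le (l := l) (j := 2 * (l.length / 2) + 1) (by omega)] at this
    omega
  have hpos := hl.part_pos (j := 2 * m + 1) (by omega)
  have hprev := hl.part_succ_le (2 * m)
  have hrem := h0 m
  obtain ⟨l', hmove, hp⟩ := exists_ritMove_of_part hl (i := 2 * m + 1)
    (v := part l (2 * m + 1) - 1) (by omega)
    (by rw [part_eq_zero_of_length_le (by omega)]; exact Nat.zero_le _)
  refine ⟨l', m, hmove, fun j hj => rem_eq_of_part_eq_update hp (by omega), ?_⟩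
  unfold rem at hrem ⊢
  simp only [hp, if_neg (Nat.succ_ne_self _).symm, ↓reduceIte]
  omega

theorem ritMove_induction {P : List ℕ → Prop}
    (step : ∀ l, IsPartition l → (∀ l', RitMove l l' → P l') → P l) {l : List ℕ}
    (hl : IsPartition l) : P l := by
  induction h : l.sum using Nat.strong_induction_on generalizing l with
  | _ n ih => exact step l hl fun l' hm => ih _ (h ▸ hm.sum_lt) hm.isPartition rfl

lemma mexOf_eq {S : Set ℕ} {s : ℕ} (hs : s ∉ S) (hlt : ∀ t < s, t ∈ S) : mexOf S = s :=
  le_antisymm (Nat.sInf_le hs) <| le_csInf ⟨s, hs⟩ fun _ ht => not_lt.1 fun h => ht (hlt _ h)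

lemma mexOf_ritMove_congr {l : List ℕ} {f g : List ℕ → ℕ} (h : ∀ l', RitMove l l' → f l' = g l') :
    mexOf {n | ∃ l', RitMove l l' ∧ f l' = n} = mexOf {n | ∃ l', RitMove l l' ∧ g l' = n} :=
  congrArg mexOf <| Set.ext fun _ => exists_congr fun l' =>
    and_congr_right fun hm => by rw [h l' hm]

lemma RitMove.nimSum_ne {l l' : List ℕ} (hl : IsPartition l) (hm : RitMove l l') :
    nimSum l' ≠ nimSum l := by
  obtain ⟨k, hk, hne⟩ := hm.exists_rem hl
  rw [nimSum_update hk]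
  intro h
  exact hne (Nat.eq_of_xor_eq_zero (Nat.xor_right_inj.1 (h.trans (Nat.xor_zero _).symm))).symm

lemma mexOf_nimSum {l : List ℕ} (hl : IsPartition l) :
    mexOf {n | ∃ l', RitMove l l' ∧ nimSum l' = n} = nimSum l := by
  refine mexOf_eq (fun ⟨l', hm, h⟩ => hm.nimSum_ne hl h) fun t ht => ?_
  obtain ⟨k, hk⟩ := exists_rem_xor_lt_of_lt_nimSum ht
  obtain ⟨l', hm, hj, hr⟩ := exists_ritMove_rem_eq hl hk
  exact ⟨l', hm, by rw [nimSum_update hj, hr, Nat.xor_xor_cancel_left, Nat.xor_xor_cancel_left]⟩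

theorem IsRitGrundy.eq_nimSum {G : List ℕ → ℕ} (hG : IsRitGrundy G) {l : List ℕ}
    (hl : IsPartition l) : G l = nimSum l :=
  ritMove_induction (P := fun l => G l = nimSum l)
    (fun l hl ih => by rw [hG l hl, mexOf_ritMove_congr ih, mexOf_nimSum hl]) hl

def RemLeOne (l : List ℕ) : Prop := ∀ j, rem l j ≤ 1

/-- The misère Nim value of the remnant. -/
noncomputable def misereNimSum (l : List ℕ) : ℕ :=
  open Classical in if RemLeOne l then nimSum l ^^^ 1 else nimSum l

lemma two_le_rem_of_not_remLeOne {l : List ℕ} {k : ℕ} (h : ¬RemLeOne l)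
    (hoff : ∀ j ≠ k, rem l j ≤ 1) : 2 ≤ rem l k := by
  by_contra hk
  exact h fun j => if hj : j = k then hj ▸ by omega else hoff j hj

lemma remLeOne_of_update {l l' : List ℕ} {k : ℕ} (hoff : ∀ j ≠ k, rem l j ≤ 1)
    (hj : ∀ j ≠ k, rem l' j = rem l j) (hk : rem l' k ≤ 1) : RemLeOne l' :=
  fun j => if h : j = k then h ▸ hk else hj j h ▸ hoff j h

/-- Changing one coordinate of a remnant with all entries `≤ 1` into one `≥ 2` changes the
nim-sum by at least `2`. -/
lemma nimSum_ne_xor_one {l l' : List ℕ} {k : ℕ} (hj : ∀ j ≠ k, rem l' j = rem l j)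
    (hl : RemLeOne l) (hl' : ¬RemLeOne l') : nimSum l' ≠ nimSum l ^^^ 1 := by
  have hbig := two_le_rem_of_not_remLeOne hl' fun j hjk => hj j hjk ▸ hl j
  rw [nimSum_update hj]
  intro h
  have hxor : rem l k ^^^ rem l' k = 1 := Nat.xor_right_inj.1 h
  have := xor_le_one_of_le_one (hl k) le_rfl
  rw [← hxor, Nat.xor_xor_cancel_left] at this
  omega

lemma exists_ritMove_remLeOne_nimSum_eq {l : List ℕ} (hl : IsPartition l) {k b : ℕ}
    (hoff : ∀ j ≠ k, rem l j ≤ 1) (hk : 2 ≤ rem l k) (hb : b ≤ 1) :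
    ∃ l', RitMove l l' ∧ RemLeOne l' ∧ nimSum l' = b := by
  have hc : nimSum l ^^^ rem l k ≤ 1 := by
    obtain ⟨l₀, -, hj₀, hr₀⟩ := exists_ritMove_rem_eq hl (k := k) (r := 0) (by omega)
    have := nimSum_le_one (remLeOne_of_update hoff hj₀ (by omega))
    rwa [nimSum_update hj₀, hr₀, Nat.xor_zero] at this
  have hr := xor_le_one_of_le_one hc hb
  obtain ⟨l', hm, hj, hr'⟩ := exists_ritMove_rem_eq hl (lt_of_le_of_lt hr hk)
  refine ⟨l', hm, remLeOne_of_update hoff hj (hr' ▸ hr), ?_⟩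
  rw [nimSum_update hj, hr', ← Nat.xor_assoc, Nat.xor_xor_cancel_left]

lemma exists_ritMove_remLeOne_nimSum_eq_one {l : List ℕ} (hl : IsPartition l) (hne : l ≠ [])
    (hsmall : RemLeOne l) (h0 : nimSum l = 0) :
    ∃ l', RitMove l l' ∧ RemLeOne l' ∧ nimSum l' = 1 := by
  by_cases hone : ∃ k, rem l k = 1
  · obtain ⟨k, hk⟩ := hone
    obtain ⟨l', hm, hj, hr⟩ := exists_ritMove_rem_eq hl (k := k) (r := 0) (by omega)
    refine ⟨l', hm, remLeOne_of_update (fun j _ => hsmall j) hj (by omega), ?_⟩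
    rw [nimSum_update hj, h0, hk, hr]
    rfl
  · simp only [not_exists] at hone
    have hzero : ∀ j, rem l j = 0 := fun j => by
      have := hsmall j
      have := hone j
      omega
    obtain ⟨l', k, hm, hj, hr⟩ := exists_ritMove_rem_eq_one hl hne hzero
    refine ⟨l', hm, remLeOne_of_update (fun j _ => hsmall j) hj (by omega), ?_⟩
    rw [nimSum_update hj, h0, hzero k, hr]
    rfl

lemma mexOf_misereNimSum_of_remLeOne {l : List ℕ} (hl : IsPartition l) (hne : l ≠ [])
    (hsmall : RemLeOne l) :
    mexOf {n | ∃ l', RitMove l l' ∧ misereNimSum l' = n} = nimSum l ^^^ 1 := by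
  refine mexOf_eq ?_ fun t ht => ?_
  · rintro ⟨l', hm, h⟩
    obtain ⟨k, hj, -⟩ := hm.exists_rem hl
    by_cases hl' : RemLeOne l'
    · rw [misereNimSum, if_pos hl', Nat.xor_left_inj] at h
      exact hm.nimSum_ne hl h
    · rw [misereNimSum, if_neg hl'] at h
      exact nimSum_ne_xor_one hj hsmall hl' h
  · have h0 : nimSum l = 0 ∧ t = 0 := by
      have := nimSum_le_one hsmall
      interval_cases h : nimSum l <;> simp_all
    obtain ⟨l', hm, hl', h1⟩ := exists_ritMove_remLeOne_nimSum_eq_one hl hne hsmall h0.1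
    exact ⟨l', hm, by rw [misereNimSum, if_pos hl', h1, h0.2]; rfl⟩

lemma mexOf_misereNimSum_of_not_remLeOne {l : List ℕ} (hl : IsPartition l)
    (hbig : ¬RemLeOne l) :
    mexOf {n | ∃ l', RitMove l l' ∧ misereNimSum l' = n} = nimSum l := by
  refine mexOf_eq ?_ fun t ht => ?_
  · rintro ⟨l', hm, h⟩
    obtain ⟨k, hj, -⟩ := hm.exists_rem hl
    by_cases hl' : RemLeOne l'
    · rw [misereNimSum, if_pos hl'] at h
      exact nimSum_ne_xor_one (fun j hjk => (hj j hjk).symm) hl' hbig h.symm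
    · rw [misereNimSum, if_neg hl'] at h
      exact hm.nimSum_ne hl h
  · obtain ⟨k, hk⟩ := exists_rem_xor_lt_of_lt_nimSum ht
    obtain ⟨l', hm, hj, hr⟩ := exists_ritMove_rem_eq hl hk
    have hs : nimSum l' = t := by
      rw [nimSum_update hj, hr, Nat.xor_xor_cancel_left, Nat.xor_xor_cancel_left]
    by_cases hl' : RemLeOne l'
    · -- the Nim move lands among the positions with flipped value; flip the last bit back
      have hoff : ∀ j ≠ k, rem l j ≤ 1 := fun j hjk => hj j hjk ▸ hl' j
      have ht1 : t ≤ 1 := hs ▸ nimSum_le_one hl'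
      obtain ⟨l'', hm', hl'', hs''⟩ := exists_ritMove_remLeOne_nimSum_eq hl hoff
        (two_le_rem_of_not_remLeOne hbig hoff) (xor_le_one_of_le_one ht1 le_rfl)
      exact ⟨l'', hm', by rw [misereNimSum, if_pos hl'', hs'', Nat.xor_assoc, Nat.xor_self,
        Nat.xor_zero]⟩
    · exact ⟨l', hm, by rw [misereNimSum, if_neg hl', hs]⟩

theorem IsRitMisereGrundy.eq_misereNimSum {Gm : List ℕ → ℕ} (hGm : IsRitMisereGrundy Gm)
    {l : List ℕ} (hl : IsPartition l) : Gm l = misereNimSum l := by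
  refine ritMove_induction (P := fun l => Gm l = misereNimSum l) (fun l hl ih => ?_) hl
  rcases eq_or_ne l [] with rfl | hne
  · have : RemLeOne [] := fun j => by simp [rem, part]
    rw [hGm.1, misereNimSum, if_pos this]
    rfl
  · rw [hGm.2 l hl hne, mexOf_ritMove_congr ih]
    by_cases hsmall : RemLeOne l
    · rw [mexOf_misereNimSum_of_remLeOne hl hne hsmall, misereNimSum, if_pos hsmall]
    · rw [mexOf_misereNimSum_of_not_remLeOne hl hsmall, misereNimSum, if_neg hsmall]

lemma conwayPair_iff_remLeOne {G Gm : List ℕ → ℕ} (hG : IsRitGrundy G)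
    (hGm : IsRitMisereGrundy Gm) {l : List ℕ} (hl : IsPartition l) :
    ((G l = 0 ∧ Gm l = 1) ∨ (G l = 1 ∧ Gm l = 0)) ↔ RemLeOne l := by
  rw [hG.eq_nimSum hl, hGm.eq_misereNimSum hl, misereNimSum]
  by_cases h : RemLeOne l
  · have := nimSum_le_one h
    simp only [h, if_true, iff_true]
    interval_cases nimSum l <;> decide
  · simp only [h, if_false, iff_false]
    omega

/-- RIT is miserable. -/
theorem stmt_14 (G Gm : List ℕ → ℕ) (hG : IsRitGrundy G)
    (hGm : IsRitMisereGrundy Gm) (x : List ℕ) (hx : IsPartition x) :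
    ((G x = 0 ∧ Gm x = 1) ∨ (G x = 1 ∧ Gm x = 0)) ∨
    (∀ y, RitMove x y → ¬ ((G y = 0 ∧ Gm y = 1) ∨ (G y = 1 ∧ Gm y = 0))) ∨
    ((∃ y, RitMove x y ∧ G y = 0 ∧ Gm y = 1) ∧
      (∃ y, RitMove x y ∧ G y = 1 ∧ Gm y = 0)) := by
  have pair_iff {y} (hy : IsPartition y) := conwayPair_iff_remLeOne hG hGm hy
  by_cases hsmall : RemLeOne x
  · exact Or.inl ((pair_iff hx).2 hsmall)
  by_cases hunique : ∃ k, ∀ j ≠ k, rem x j ≤ 1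
  · obtain ⟨k, hoff⟩ := hunique
    have hk := two_le_rem_of_not_remLeOne hsmall hoff
    obtain ⟨y₀, hm₀, hy₀, hs₀⟩ := exists_ritMove_remLeOne_nimSum_eq hx hoff hk zero_le_one
    obtain ⟨y₁, hm₁, hy₁, hs₁⟩ := exists_ritMove_remLeOne_nimSum_eq hx hoff hk le_rfl
    refine Or.inr (Or.inr ⟨⟨y₀, hm₀, ?_⟩, ⟨y₁, hm₁, ?_⟩⟩)
    · rw [hG.eq_nimSum hm₀.isPartition, hGm.eq_misereNimSum hm₀.isPartition, misereNimSum,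
        if_pos hy₀, hs₀]
      decide
    · rw [hG.eq_nimSum hm₁.isPartition, hGm.eq_misereNimSum hm₁.isPartition, misereNimSum,
        if_pos hy₁, hs₁]
      decide
  · refine Or.inr (Or.inl fun y hm hy => hunique ?_)
    obtain ⟨k, hj, -⟩ := hm.exists_rem hx
    exact ⟨k, fun j hjk => hj j hjk ▸ (pair_iff hm.isPartition).1 hy j⟩
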